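/- Let WN = (P,T,F,i,o) be a sound acyclic free-choice workflow net (AFW-net). For every transition y ∈ T, every node x with (x,y) ∈ ∥, and every place s ∈ y•: there is no acyclic path from x to s if and only if (x,s) ∈ ∥. -/

import Mathlib

/-- A Petri net: finite disjoint sets of places and transitions and a flow relation
`F ⊆ (P × T) ∪ (T × P)`. -/
structure PetriNet (α : Type) [DecidableEq α] where
  places : Finset α
  transitions : Finset α
  flow : Finset (α × α)
  disjoint_pt : Disjoint places transitions
  flow_mem : ∀ e ∈ flow,
    (e.1 ∈ places ∧ e.2 ∈ transitions) ∨ (e.1 ∈ transitions ∧ e.2 ∈ places)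

namespace PetriNet

variable {α : Type} [DecidableEq α]

/-- All nodes `P ∪ T` of the net. -/
def nodes (N : PetriNet α) : Finset α := N.places ∪ N.transitions

/-- The preset `•x` of a node. -/
def preset (N : PetriNet α) (x : α) : Finset α :=
  N.nodes.filter (fun p => (p, x) ∈ N.flow)

/-- The postset `x•` of a node. -/
def postset (N : PetriNet α) (x : α) : Finset α :=
  N.nodes.filter (fun s => (x, s) ∈ N.flow)

/-- A path: a nonempty sequence of nodes, each consecutive pair related by the flow. -/
def IsPath (N : PetriNet α) (w : List α) : Prop :=
  w ≠ [] ∧ (∀ x ∈ w, x ∈ N.nodes) ∧ w.Chain' (fun a b => (a, b) ∈ N.flow)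

/-- An acyclic path: a path whose nodes are pairwise distinct. -/
def IsAcyclicPath (N : PetriNet α) (w : List α) : Prop :=
  N.IsPath w ∧ w.Nodup

/-- There is an acyclic path from `x` to `y`. -/
def HasAcyclicPath (N : PetriNet α) (x y : α) : Prop :=
  ∃ w, N.IsAcyclicPath w ∧ w.head? = some x ∧ w.getLast? = some y

/-- `HasPath(x)`: the set of all nodes to which `x` has an acyclic path
(including `x` itself, via the trivial path `(x)` when `x` is a node). -/
def HasPathSet (N : PetriNet α) (x : α) : Set α := {y | N.HasAcyclicPath x y}

/-- A net is acyclic iff no node has a nontrivial path to itself. -/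
def Acyclic (N : PetriNet α) : Prop :=
  ∀ x, ¬ ∃ w, N.IsPath w ∧ 2 ≤ w.length ∧ w.head? = some x ∧ w.getLast? = some x

/-- A transition `t` is enabled in marking `M` iff all its input places carry a token. -/
def Enabled (N : PetriNet α) (M : α → ℕ) (t : α) : Prop :=
  t ∈ N.transitions ∧ ∀ p ∈ N.preset t, 1 ≤ M p

/-- Firing `t` consumes one token from each input place and produces one on each output place. -/
def fire (N : PetriNet α) (M : α → ℕ) (t : α) : α → ℕ := fun p =>
  (M p - (if p ∈ N.preset t then 1 else 0)) + (if p ∈ N.postset t then 1 else 0)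

/-- A step `M —t→ M'`. -/
def Step (N : PetriNet α) (M : α → ℕ) (t : α) (M' : α → ℕ) : Prop :=
  N.Enabled M t ∧ M' = N.fire M t

/-- Reachability via finite occurrence sequences. -/
def Reachable (N : PetriNet α) : (α → ℕ) → (α → ℕ) → Prop :=
  Relation.ReflTransGen (fun M M' => ∃ t, N.Step M t M')

/-- Liveness with respect to an initial marking. -/
def Live (N : PetriNet α) (M₀ : α → ℕ) : Prop :=
  ∀ M, N.Reachable M₀ M → ∀ t ∈ N.transitions, ∃ M', N.Reachable M M' ∧ N.Enabled M' t

/-- Boundedness with respect to an initial marking. -/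
def Bounded (N : PetriNet α) (M₀ : α → ℕ) : Prop :=
  ∃ n : ℕ, ∀ M, N.Reachable M₀ M → ∀ p ∈ N.places, M p ≤ n

/-- Free-choice: every place with more than one output transition is the unique
input of each of those transitions. -/
def FreeChoice (N : PetriNet α) : Prop :=
  ∀ p ∈ N.places, 1 < (N.postset p).card → ∀ t ∈ N.postset p, N.preset t = {p}

/-- A node is active in `M` iff it is a place carrying a token or an enabled transition. -/
def Active (N : PetriNet α) (x : α) (M : α → ℕ) : Prop :=
  (x ∈ N.places ∧ 1 ≤ M x) ∨ (x ∈ N.transitions ∧ N.Enabled M x)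

/-- One unfolding of the defining clauses of the concurrency relation. -/
def concStep (N : PetriNet α) (M₀ : α → ℕ) (R : Set (α × α)) : Set (α × α) :=
  {q | q.1 ≠ q.2 ∧
    (∃ M, N.Reachable M₀ M ∧ N.Active q.1 M ∧ N.Active q.2 M) ∧
    (q.1 ∈ N.transitions → q.2 ∈ N.places → ∀ z ∈ N.preset q.1, (z, q.2) ∈ R) ∧
    (q.1 ∈ N.places → q.2 ∈ N.transitions → ∀ z ∈ N.preset q.2, (z, q.1) ∈ R) ∧
    (q.1 ∈ N.transitions → q.2 ∈ N.transitions →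
      ∀ z ∈ N.preset q.1, ∀ z' ∈ N.preset q.2, (z, z') ∈ R)}

/-- The concurrency relation `∥`: the greatest relation consistent with its
defining clauses (Def. of concurrency). -/
def Concurrent (N : PetriNet α) (M₀ : α → ℕ) : Set (α × α) :=
  ⋃₀ {R | R ⊆ N.concStep M₀ R}

/-- The number of places on `w` carrying at least one token in `M`. -/
def tokensOn (N : PetriNet α) (M : α → ℕ) (w : List α) : ℕ :=
  (w.toFinset.filter (fun p => p ∈ N.places ∧ 1 ≤ M p)).card

end PetriNet

/-- A workflow net: a Petri net with a source place `i` (`•i = ∅`), a sink place `o`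
(`o• = ∅`), and every node on a path from `i` to `o`. -/
structure WorkflowNet (α : Type) [DecidableEq α] extends PetriNet α where
  source : α
  sink : α
  source_mem : source ∈ places
  sink_mem : sink ∈ places
  source_no_pre : toPetriNet.preset source = ∅
  sink_no_post : toPetriNet.postset sink = ∅
  all_on_path : ∀ x ∈ toPetriNet.nodes, ∃ w, toPetriNet.IsPath w ∧
    w.head? = some source ∧ w.getLast? = some sink ∧ x ∈ w

namespace WorkflowNet

variable {α : Type} [DecidableEq α]

/-- The initial marking: one token on the source, none elsewhere. -/
def initialMarking (W : WorkflowNet α) : α → ℕ := fun p => if p = W.source then 1 else 0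

/-- The terminal marking: one token on the sink, none elsewhere. -/
def terminalMarking (W : WorkflowNet α) : α → ℕ := fun p => if p = W.sink then 1 else 0

/-- Soundness of a workflow net. -/
def Sound (W : WorkflowNet α) : Prop :=
  (∀ M, W.toPetriNet.Reachable W.initialMarking M →
    W.toPetriNet.Reachable M W.terminalMarking ∧ (1 ≤ M W.sink → M = W.terminalMarking)) ∧
  (∀ t ∈ W.transitions, ∃ M M', W.toPetriNet.Reachable W.initialMarking M ∧
    W.toPetriNet.Step M t M')

end WorkflowNet

/-!
Such a net is safe in a strong sense: along an occurrence sequence from the initial marking no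
place receives a token twice. If a place `p` did, completing the run to the terminal marking
would consume `p` twice; by free choice the first consumer `u` of `p` could also have fired in
place of the second, so `u` fires twice and each place after `u` receives two tokens.
Acyclicity makes this an induction along the flow, whose base is the sink: once the sink is
marked, nothing can fire.

Concurrency is joint activity in a reachable marking with disjoint activation sets (a node
together with the input places of a transition). If `x ∥ y` and `s ∈ y•`, firing `y` keeps `x`
active and marks `s`, and safety keeps the activation sets disjoint, so `x ∥ s` unless `x = s`.
Conversely, if `x` and `s` are jointly active and there is a path from `x` to `s`, the token at
`x` can be pushed along it (by free choice or by soundness the next transition eventually gets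
enabled) and deposits a second token on `s`.
-/

theorem List.exists_eq_append_cons_of_lt_countP {β : Type*} {q : β → Bool} {l : List β} {n : ℕ}
    (h : n < l.countP q) : ∃ l₁ a l₂, l = l₁ ++ a :: l₂ ∧ q a ∧ n ≤ l₂.countP q := by
  induction l with
  | nil => simp at h
  | cons x xs ih =>
    by_cases hx : q x
    · exact ⟨[], x, xs, rfl, hx, by simp [hx] at h; omega⟩
    · obtain ⟨l₁, a, l₂, rfl, ha, hn⟩ := ih (by simpa [List.countP_cons, hx] using h)
      exact ⟨x :: l₁, a, l₂, rfl, ha, hn⟩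

namespace PetriNet

variable {α : Type} [DecidableEq α] {N : PetriNet α}

theorem mem_nodes_of_mem_flow {a b : α} (h : (a, b) ∈ N.flow) : a ∈ N.nodes ∧ b ∈ N.nodes := by
  rcases N.flow_mem _ h with ⟨ha, hb⟩ | ⟨ha, hb⟩ <;>
    simp [nodes, ha, hb]

@[simp]
theorem mem_preset {x t : α} : x ∈ N.preset t ↔ (x, t) ∈ N.flow := by
  simpa [preset] using fun h => (mem_nodes_of_mem_flow h).1

@[simp]
theorem mem_postset {t x : α} : x ∈ N.postset t ↔ (t, x) ∈ N.flow := by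
  simpa [postset] using fun h => (mem_nodes_of_mem_flow h).2

theorem not_mem_transitions_of_mem_places {p : α} (hp : p ∈ N.places) : p ∉ N.transitions :=
  Finset.disjoint_left.mp N.disjoint_pt hp

theorem mem_places_iff_of_mem_flow {a b : α} (h : (a, b) ∈ N.flow) :
    a ∈ N.places ↔ b ∈ N.transitions := by
  rcases N.flow_mem _ h with ⟨ha, hb⟩ | ⟨ha, hb⟩
  · exact iff_of_true ha hb
  · exact iff_of_false (fun h => not_mem_transitions_of_mem_places h ha)
      (fun h => not_mem_transitions_of_mem_places hb h)

theorem mem_transitions_iff_of_mem_flow {a b : α} (h : (a, b) ∈ N.flow) :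
    a ∈ N.transitions ↔ b ∈ N.places := by
  rcases N.flow_mem _ h with ⟨ha, hb⟩ | ⟨ha, hb⟩
  · exact iff_of_false (not_mem_transitions_of_mem_places ha)
      (fun h => not_mem_transitions_of_mem_places h hb)
  · exact iff_of_true ha hb

theorem Active.mem_nodes {x : α} {M : α → ℕ} (h : N.Active x M) : x ∈ N.nodes := by
  rcases h with ⟨hx, -⟩ | ⟨hx, -⟩ <;> simp [nodes, hx]

def Precedes (N : PetriNet α) : α → α → Prop := Relation.TransGen fun a b => (a, b) ∈ N.flow

theorem Precedes.of_isPath {w : List α} {a b : α} (hw : N.IsPath w) (ha : w.head? = some a)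
    (hb : w.getLast? = some b) (hab : a ≠ b) : N.Precedes a b := by
  obtain ⟨hne, -, hchain⟩ := hw
  have h := List.relationReflTransGen_of_exists_isChain w hchain hne
  rw [List.head?_eq_some_head hne, Option.some_inj] at ha
  rw [List.getLast?_eq_some_getLast hne, Option.some_inj] at hb
  rw [ha, hb, Relation.reflTransGen_iff_eq_or_transGen] at h
  exact h.resolve_left hab.symm

theorem Precedes.exists_isPath {a b : α} (h : N.Precedes a b) :
    ∃ w, N.IsPath w ∧ 2 ≤ w.length ∧ w.head? = some a ∧ w.getLast? = some b := by
  induction h using Relation.TransGen.head_induction_on with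
  | single hab =>
    obtain ⟨ha, hb⟩ := mem_nodes_of_mem_flow hab
    exact ⟨[_, b], ⟨by simp, by simp [ha, hb], List.isChain_pair.mpr hab⟩, by simp, rfl, rfl⟩
  | head hac _ ih =>
    obtain ⟨w, ⟨hne, hnodes, hchain⟩, hlen, hhead, hlast⟩ := ih
    obtain ⟨c, w, rfl⟩ := List.exists_cons_of_ne_nil hne
    obtain rfl : c = _ := by simpa using hhead
    refine ⟨_ :: c :: w, ⟨by simp, ?_, List.IsChain.cons_cons hac hchain⟩, by simp, rfl, ?_⟩
    · simpa [(mem_nodes_of_mem_flow hac).1] using hnodes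
    · rwa [List.getLast?_cons_cons]

theorem Precedes.exists_flow_right {a b : α} (h : N.Precedes a b) : ∃ c, (c, b) ∈ N.flow := by
  obtain ⟨c, -, hc⟩ := Relation.TransGen.tail'_iff.mp h
  exact ⟨c, hc⟩

theorem Acyclic.not_precedes_self (h : N.Acyclic) (a : α) : ¬ N.Precedes a a :=
  fun ha => h a ha.exists_isPath

open Classical in
noncomputable def rank (N : PetriNet α) (a : α) : ℕ := (N.nodes.filter (N.Precedes a)).card

theorem Acyclic.rank_lt (h : N.Acyclic) {a b : α} (hab : N.Precedes a b) : N.rank b < N.rank a := by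
  classical
  refine Finset.card_lt_card ⟨fun c hc => ?_, fun hsub => ?_⟩
  · simp only [Finset.mem_filter] at hc ⊢
    exact ⟨hc.1, hab.trans hc.2⟩
  · obtain ⟨c, hc⟩ := hab.exists_flow_right
    have hb : b ∈ N.nodes.filter (N.Precedes a) :=
      Finset.mem_filter.mpr ⟨(mem_nodes_of_mem_flow hc).2, hab⟩
    exact h.not_precedes_self b (Finset.mem_filter.mp (hsub hb)).2

theorem Acyclic.wellFounded (h : N.Acyclic) : WellFounded (flip N.Precedes) :=
  Subrelation.wf (fun hab => h.rank_lt hab) (measure N.rank).wf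

theorem le_fire_of_not_mem_preset {M : α → ℕ} {t p : α} (hp : p ∉ N.preset t) :
    M p ≤ N.fire M t p := by
  simp only [fire, if_neg hp]
  omega

theorem one_le_fire_of_mem_postset {M : α → ℕ} {t p : α} (hp : p ∈ N.postset t) :
    1 ≤ N.fire M t p := by
  simp only [fire, if_pos hp]
  omega

theorem fire_add_of_enabled {M : α → ℕ} {t : α} (ht : N.Enabled M t) (p : α) :
    N.fire M t p + (if p ∈ N.preset t then 1 else 0) = M p + if p ∈ N.postset t then 1 else 0 := by
  unfold fire
  by_cases hpre : p ∈ N.preset t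
  · have := ht.2 p hpre
    split_ifs <;> omega
  · split_ifs <;> omega

def fireSeq (N : PetriNet α) : (α → ℕ) → List α → α → ℕ
  | M, [] => M
  | M, t :: ts => N.fireSeq (N.fire M t) ts

def Fireable (N : PetriNet α) : (α → ℕ) → List α → Prop
  | _, [] => True
  | M, t :: ts => N.Enabled M t ∧ N.Fireable (N.fire M t) ts

def produced (N : PetriNet α) (p : α) (ts : List α) : ℕ := ts.countP (p ∈ N.postset ·)

def consumed (N : PetriNet α) (p : α) (ts : List α) : ℕ := ts.countP (p ∈ N.preset ·)

@[simp]
theorem fireSeq_append (M : α → ℕ) (ts ts' : List α) :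
    N.fireSeq M (ts ++ ts') = N.fireSeq (N.fireSeq M ts) ts' := by
  induction ts generalizing M with
  | nil => rfl
  | cons t ts ih => exact ih _

theorem fireable_append {M : α → ℕ} {ts ts' : List α} :
    N.Fireable M (ts ++ ts') ↔ N.Fireable M ts ∧ N.Fireable (N.fireSeq M ts) ts' := by
  induction ts generalizing M with
  | nil => simp [Fireable, fireSeq]
  | cons t ts ih => simp [Fireable, fireSeq, ih, and_assoc]

theorem fireable_append_singleton {M : α → ℕ} {ts : List α} {t : α} :
    N.Fireable M (ts ++ [t]) ↔ N.Fireable M ts ∧ N.Enabled (N.fireSeq M ts) t := by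
  simp [fireable_append, Fireable]

@[simp]
theorem produced_append (p : α) (ts ts' : List α) :
    N.produced p (ts ++ ts') = N.produced p ts + N.produced p ts' :=
  List.countP_append ..

@[simp]
theorem consumed_append (p : α) (ts ts' : List α) :
    N.consumed p (ts ++ ts') = N.consumed p ts + N.consumed p ts' :=
  List.countP_append ..

theorem produced_cons (p t : α) (ts : List α) :
    N.produced p (t :: ts) = N.produced p ts + if p ∈ N.postset t then 1 else 0 := by
  simp only [produced, List.countP_cons, decide_eq_true_eq]

theorem consumed_cons (p t : α) (ts : List α) :
    N.consumed p (t :: ts) = N.consumed p ts + if p ∈ N.preset t then 1 else 0 := by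
  simp only [consumed, List.countP_cons, decide_eq_true_eq]

theorem Fireable.mem_transitions {M : α → ℕ} {ts : List α} (h : N.Fireable M ts) {t : α}
    (ht : t ∈ ts) : t ∈ N.transitions := by
  induction ts generalizing M with
  | nil => cases ht
  | cons u ts ih =>
    rcases List.mem_cons.mp ht with rfl | ht
    · exact h.1.1
    · exact ih h.2 ht

/-- The marking equation, with both sides moved so that no truncated subtraction occurs. -/
theorem Fireable.fireSeq_add_consumed {M : α → ℕ} {ts : List α} (h : N.Fireable M ts) (p : α) :
    N.fireSeq M ts p + N.consumed p ts = M p + N.produced p ts := by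
  induction ts generalizing M with
  | nil => simp [fireSeq, consumed, produced]
  | cons t ts ih =>
    have := ih h.2
    have := fire_add_of_enabled h.1 p
    rw [fireSeq, consumed_cons, produced_cons]
    omega

theorem reachable_iff_exists_fireable {M M' : α → ℕ} :
    N.Reachable M M' ↔ ∃ ts, N.Fireable M ts ∧ N.fireSeq M ts = M' := by
  constructor
  · intro h
    induction h with
    | refl => exact ⟨[], trivial, rfl⟩
    | tail _ hstep ih =>
      obtain ⟨ts, hts, rfl⟩ := ih
      obtain ⟨t, hen, rfl⟩ := hstep
      exact ⟨ts ++ [t], fireable_append_singleton.mpr ⟨hts, hen⟩, by simp [fireSeq]⟩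
  · rintro ⟨ts, hts, rfl⟩
    induction ts generalizing M with
    | nil => exact .refl
    | cons t ts ih => exact .head ⟨t, hts.1, rfl⟩ (ih hts.2)

theorem Fireable.reachable {M : α → ℕ} {ts : List α} (h : N.Fireable M ts) :
    N.Reachable M (N.fireSeq M ts) :=
  reachable_iff_exists_fireable.mpr ⟨ts, h, rfl⟩

-- Containing `a` itself, disjoint activation sets force `a ≠ b`.
def activationSet (N : PetriNet α) (a : α) : Finset α :=
  if a ∈ N.transitions then insert a (N.preset a) else {a}

theorem mem_activationSet {a z : α} :
    z ∈ N.activationSet a ↔ z = a ∨ a ∈ N.transitions ∧ z ∈ N.preset a := by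
  unfold activationSet
  split_ifs with ha <;> simp [ha]

theorem mem_activationSet_self (a : α) : a ∈ N.activationSet a :=
  mem_activationSet.mpr (.inl rfl)

theorem activationSet_of_mem_places {p : α} (hp : p ∈ N.places) : N.activationSet p = {p} := by
  simp [activationSet, not_mem_transitions_of_mem_places hp]

theorem activationSet_subset_of_mem_preset {t z : α} (ht : t ∈ N.transitions)
    (hz : z ∈ N.preset t) : N.activationSet z ⊆ N.activationSet t := by
  have hzp : z ∈ N.places := (mem_places_iff_of_mem_flow (mem_preset.mp hz)).mpr ht
  rw [activationSet_of_mem_places hzp, Finset.singleton_subset_iff, mem_activationSet]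
  exact .inr ⟨ht, hz⟩

theorem Active.enabled {t : α} {M : α → ℕ} (h : N.Active t M) (ht : t ∈ N.transitions) :
    N.Enabled M t := by
  rcases h with ⟨htp, -⟩ | ⟨-, hen⟩
  · exact absurd ht (not_mem_transitions_of_mem_places htp)
  · exact hen

theorem Active.of_mem_preset {t z : α} {M : α → ℕ} (h : N.Active t M) (ht : t ∈ N.transitions)
    (hz : z ∈ N.preset t) : N.Active z M :=
  .inl ⟨(mem_places_iff_of_mem_flow (mem_preset.mp hz)).mpr ht, (h.enabled ht).2 z hz⟩

theorem Active.fire {a t : α} {M : α → ℕ} (h : N.Active a M)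
    (hdisj : Disjoint (N.activationSet a) (N.preset t)) : N.Active a (N.fire M t) := by
  rcases h with ⟨hap, hM⟩ | ⟨hat, hen⟩
  · rw [activationSet_of_mem_places hap, Finset.disjoint_singleton_left] at hdisj
    exact .inl ⟨hap, hM.trans (le_fire_of_not_mem_preset hdisj)⟩
  · refine .inr ⟨hat, hat, fun z hz => (hen.2 z hz).trans (le_fire_of_not_mem_preset ?_)⟩
    exact Finset.disjoint_left.mp hdisj (by simp [activationSet, hat, hz])

theorem concStep_mono (M₀ : α → ℕ) {R S : Set (α × α)} (h : R ⊆ S) :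
    N.concStep M₀ R ⊆ N.concStep M₀ S := by
  rintro q ⟨hne, hM, h₁, h₂, h₃⟩
  exact ⟨hne, hM, fun ha hb z hz => h (h₁ ha hb z hz), fun ha hb z hz => h (h₂ ha hb z hz),
    fun ha hb z hz z' hz' => h (h₃ ha hb z hz z' hz')⟩

theorem mem_concurrent_of_subset_concStep {M₀ : α → ℕ} {R : Set (α × α)}
    (hR : R ⊆ N.concStep M₀ R) {q : α × α} (hq : q ∈ R) : q ∈ N.Concurrent M₀ :=
  Set.mem_sUnion.mpr ⟨R, hR, hq⟩

theorem concurrent_subset_concStep (M₀ : α → ℕ) :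
    N.Concurrent M₀ ⊆ N.concStep M₀ (N.Concurrent M₀) := by
  rintro q ⟨R, hR, hq⟩
  exact concStep_mono M₀ (fun r hr => mem_concurrent_of_subset_concStep hR hr) (hR hq)

theorem ne_of_mem_concurrent {M₀ : α → ℕ} {a b : α} (h : (a, b) ∈ N.Concurrent M₀) : a ≠ b :=
  (concurrent_subset_concStep M₀ h).1

theorem disjoint_activationSet_of_mem_concurrent {M₀ : α → ℕ} {a b : α}
    (h : (a, b) ∈ N.Concurrent M₀) : Disjoint (N.activationSet a) (N.activationSet b) := by
  obtain ⟨hne, -, h₁, h₂, h₃⟩ := concurrent_subset_concStep M₀ h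
  have place_of_mem_preset {x t : α} (ht : t ∈ N.transitions) (hx : x ∈ N.preset t) :
      x ∈ N.places := (mem_places_iff_of_mem_flow (mem_preset.mp hx)).mpr ht
  refine Finset.disjoint_left.mpr fun z hza hzb => ?_
  rcases mem_activationSet.mp hza with rfl | ⟨hat, hza⟩ <;>
    rcases mem_activationSet.mp hzb with rfl | ⟨hbt, hzb⟩
  · exact hne rfl
  · exact ne_of_mem_concurrent (h₂ (place_of_mem_preset hbt hzb) hbt z hzb) rfl
  · exact ne_of_mem_concurrent (h₁ hat (place_of_mem_preset hat hza) z hza) rfl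
  · exact ne_of_mem_concurrent (h₃ hat hbt z hza z hzb) rfl

theorem mem_concurrent_iff {M₀ : α → ℕ} {a b : α} :
    (a, b) ∈ N.Concurrent M₀ ↔ ∃ M, N.Reachable M₀ M ∧ N.Active a M ∧ N.Active b M ∧
      Disjoint (N.activationSet a) (N.activationSet b) := by
  refine ⟨fun h => ?_, fun h => mem_concurrent_of_subset_concStep (R := {q | ∃ M,
    N.Reachable M₀ M ∧ N.Active q.1 M ∧ N.Active q.2 M ∧
      Disjoint (N.activationSet q.1) (N.activationSet q.2)}) ?_ h⟩
  · obtain ⟨-, ⟨M, hM, ha, hb⟩, -⟩ := concurrent_subset_concStep M₀ h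
    exact ⟨M, hM, ha, hb, disjoint_activationSet_of_mem_concurrent h⟩
  rintro ⟨a, b⟩ ⟨M, hM, ha, hb, hdisj⟩
  refine ⟨fun hab => ?_, ⟨M, hM, ha, hb⟩, fun hat _ z hz => ?_, fun _ hbt z hz => ?_,
    fun hat hbt z hz z' hz' => ?_⟩
  · obtain rfl : a = b := hab
    exact Finset.disjoint_left.mp hdisj (mem_activationSet_self a) (mem_activationSet_self a)
  · exact ⟨M, hM, ha.of_mem_preset hat hz, hb,
      hdisj.mono_left (activationSet_subset_of_mem_preset hat hz)⟩
  · exact ⟨M, hM, hb.of_mem_preset hbt hz, ha,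
      hdisj.symm.mono_left (activationSet_subset_of_mem_preset hbt hz)⟩
  · exact ⟨M, hM, ha.of_mem_preset hat hz, hb.of_mem_preset hbt hz',
      hdisj.mono (activationSet_subset_of_mem_preset hat hz)
        (activationSet_subset_of_mem_preset hbt hz')⟩

theorem hasAcyclicPath_self {x : α} (hx : x ∈ N.nodes) : N.HasAcyclicPath x x :=
  ⟨[x], ⟨⟨by simp, by simpa using hx, List.isChain_singleton x⟩, by simp⟩, rfl, rfl⟩

theorem FreeChoice.exists_fireable_one_lt_produced (hfc : N.FreeChoice) {M : α → ℕ} {ts : List α}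
    {p : α} (hp : p ∈ N.places) (h : N.Fireable M ts) (hc : 1 < N.consumed p ts) :
    ∃ u, (p, u) ∈ N.flow ∧ ∃ σ, N.Fireable M σ ∧ ∀ r ∈ N.postset u, 1 < N.produced r σ := by
  obtain ⟨l₁, u, l₂, rfl, hu, hc₂⟩ := List.exists_eq_append_cons_of_lt_countP hc
  obtain ⟨l₃, v, l₄, rfl, hv, -⟩ := List.exists_eq_append_cons_of_lt_countP hc₂
  simp only [decide_eq_true_eq, mem_preset] at hu hv
  rw [show l₁ ++ u :: (l₃ ++ v :: l₄) = (l₁ ++ u :: l₃) ++ v :: l₄ by simp, fireable_append] at h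
  obtain ⟨h₁, hv_en, -⟩ := h
  have hu_en : N.Enabled (N.fireSeq M (l₁ ++ u :: l₃)) u := by
    by_cases huv : u = v
    · exact huv ▸ hv_en
    -- `u` and `v` are in conflict at `p`, so by free choice `p` is the only input of `u`
    have hcard : 1 < (N.postset p).card :=
      Finset.one_lt_card.mpr ⟨u, mem_postset.mpr hu, v, mem_postset.mpr hv, huv⟩
    have hpre := hfc p hp hcard u (mem_postset.mpr hu)
    refine ⟨h₁.mem_transitions (by simp), fun q hq => ?_⟩
    rw [hpre, Finset.mem_singleton] at hq
    exact hq ▸ hv_en.2 p (mem_preset.mpr hv)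
  refine ⟨u, hu, l₁ ++ u :: l₃ ++ [u], fireable_append_singleton.mpr ⟨h₁, hu_en⟩, fun r hr => ?_⟩
  simp only [produced_append, produced_cons, if_pos hr]
  omega

end PetriNet

namespace WorkflowNet

open PetriNet

variable {α : Type} [DecidableEq α] {W : WorkflowNet α}

theorem exists_flow_to_of_mem_transitions {t : α} (ht : t ∈ W.transitions) :
    ∃ p, (p, t) ∈ W.flow := by
  obtain ⟨w, ⟨-, -, hchain⟩, hhead, -, htw⟩ := W.all_on_path t (by simp [nodes, ht])
  obtain ⟨l₁, l₂, rfl⟩ := List.append_of_mem htw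
  have hl₁ : l₁ ≠ [] := by
    rintro rfl
    obtain rfl : t = W.source := by simpa using hhead
    exact not_mem_transitions_of_mem_places W.source_mem ht
  exact ⟨_, List.IsChain.rel_getLast_head_of_append hchain hl₁ (List.cons_ne_nil t l₂)⟩

theorem exists_flow_from_of_mem_transitions {t : α} (ht : t ∈ W.transitions) :
    ∃ p, (t, p) ∈ W.flow := by
  obtain ⟨w, ⟨-, -, hchain⟩, -, hlast, htw⟩ := W.all_on_path t (by simp [nodes, ht])
  obtain ⟨l₁, l₂, rfl⟩ := List.append_of_mem htw
  have hl₂ : l₂ ≠ [] := by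
    rintro rfl
    obtain rfl : t = W.sink := by simpa using hlast
    exact not_mem_transitions_of_mem_places W.sink_mem ht
  rw [← List.singleton_append, ← List.append_assoc] at hchain
  exact ⟨_, by simpa using List.IsChain.rel_getLast_head_of_append hchain (by simp) hl₂⟩

theorem not_enabled_terminalMarking (t : α) : ¬ W.Enabled W.terminalMarking t := by
  rintro ⟨ht, hen⟩
  obtain ⟨p, hpt⟩ := exists_flow_to_of_mem_transitions ht
  have hp := hen p (mem_preset.mpr hpt)
  obtain rfl : p = W.sink := by
    by_contra hps
    simp [terminalMarking, hps] at hp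
  simpa [W.sink_no_post] using mem_postset.mpr hpt

theorem produced_source_eq_zero (ts : List α) : W.produced W.source ts = 0 := by
  refine List.countP_eq_zero.mpr fun t _ hsrc => ?_
  have : t ∈ W.preset W.source := mem_preset.mpr (mem_postset.mp (of_decide_eq_true hsrc))
  simp [W.source_no_pre] at this

theorem Sound.exists_fireable_consumed_eq (hsound : W.Sound) {M : α → ℕ}
    (hM : W.Reachable W.initialMarking M) :
    ∃ ts, W.Fireable M ts ∧ ∀ p ≠ W.sink, M p + W.produced p ts = W.consumed p ts := by
  obtain ⟨ts, hts, hfin⟩ := reachable_iff_exists_fireable.mp (hsound.1 M hM).1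
  refine ⟨ts, hts, fun p hp => ?_⟩
  have := hts.fireSeq_add_consumed p
  simp only [hfin, terminalMarking, if_neg hp] at this
  omega

theorem Sound.produced_sink_le_one (hsound : W.Sound) {ts : List α}
    (h : W.Fireable W.initialMarking ts) : W.produced W.sink ts ≤ 1 := by
  by_contra! h₂
  obtain ⟨l₁, a, l₂, rfl, ha, hl₂⟩ := List.exists_eq_append_cons_of_lt_countP h₂
  obtain _ | ⟨b, l₃⟩ := l₂
  · simp at hl₂
  rw [← List.singleton_append, ← List.append_assoc, fireable_append] at h
  -- once the sink is marked, soundness forces the terminal marking, which enables nothing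
  have hterm := (hsound.1 _ h.1.reachable).2 (by
    simpa [fireSeq] using one_le_fire_of_mem_postset (of_decide_eq_true ha))
  exact not_enabled_terminalMarking b (hterm ▸ h.2.1)

theorem Sound.produced_le_one (hsound : W.Sound) (hfc : W.FreeChoice) (hacyc : W.Acyclic)
    {ts : List α} (h : W.Fireable W.initialMarking ts) (p : α) : W.produced p ts ≤ 1 := by
  induction p using hacyc.wellFounded.induction generalizing ts with | _ p ih =>
  by_contra! h₂
  by_cases hps : p = W.sink
  · exact (hsound.produced_sink_le_one h).not_gt (hps ▸ h₂)
  obtain ⟨t, ht, hpt⟩ := List.countP_pos_iff.mp (zero_lt_one.trans h₂)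
  have hp : p ∈ W.places :=
    (mem_transitions_iff_of_mem_flow (by simpa using hpt)).mp (h.mem_transitions ht)
  -- completing the run, `p` is emptied, so it is consumed twice
  obtain ⟨ts', h', hcons⟩ := hsound.exists_fireable_consumed_eq h.reachable
  have hc : 1 < W.consumed p (ts ++ ts') := by
    have := h.fireSeq_add_consumed p
    have := hcons p hps
    simp only [consumed_append]
    omega
  obtain ⟨u, hpu, σ, hσ, hσu⟩ :=
    hfc.exists_fireable_one_lt_produced hp (fireable_append.mpr ⟨h, h'⟩) hc
  have hut : u ∈ W.transitions := (mem_places_iff_of_mem_flow hpu).mp hp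
  obtain ⟨r, hur⟩ := exists_flow_from_of_mem_transitions hut
  exact (ih r (.head hpu (.single hur)) hσ).not_gt (hσu r (mem_postset.mpr hur))

theorem Sound.marking_le_one (hsound : W.Sound) (hfc : W.FreeChoice) (hacyc : W.Acyclic) {M : α → ℕ}
    (hM : W.Reachable W.initialMarking M) (p : α) : M p ≤ 1 := by
  obtain ⟨ts, h, rfl⟩ := reachable_iff_exists_fireable.mp hM
  have hmark := h.fireSeq_add_consumed p
  have hprod := hsound.produced_le_one hfc hacyc h p
  by_cases hps : p = W.source
  · subst hps
    simp only [initialMarking, if_pos, produced_source_eq_zero] at hmark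
    omega
  · simp only [initialMarking, if_neg hps] at hmark
    omega

theorem Sound.exists_fireable_active_of_flow (hsound : W.Sound) (hfc : W.FreeChoice)
    {M : α → ℕ} {a c : α} (hM : W.Reachable W.initialMarking M) (ha : W.Active a M)
    (hac : (a, c) ∈ W.flow) : ∃ l, W.Fireable M l ∧ W.Active c (W.fireSeq M l) := by
  rcases ha with ⟨hap, haM⟩ | ⟨hat, hen⟩
  swap
  · exact ⟨[a], ⟨hen, trivial⟩, .inl ⟨(mem_transitions_iff_of_mem_flow hac).mp hat,
      one_le_fire_of_mem_postset (mem_postset.mpr hac)⟩⟩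
  have hct : c ∈ W.transitions := (mem_places_iff_of_mem_flow hac).mp hap
  by_cases hcard : 1 < (W.postset a).card
  · have hpre := hfc a hap hcard c (mem_postset.mpr hac)
    exact ⟨[], trivial, .inr ⟨hct, hct, by simpa [hpre, fireSeq] using haM⟩⟩
  -- `c` is the only way out of `a`, and soundness forces the token on `a` to leave
  have has : a ≠ W.sink := by
    rintro rfl
    simpa [W.sink_no_post] using mem_postset.mpr hac
  obtain ⟨ts, hts, hcons⟩ := hsound.exists_fireable_consumed_eq hM
  obtain ⟨v, hv, hav⟩ : ∃ v ∈ ts, a ∈ W.preset v := by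
    simpa using List.countP_pos_iff.mp (show 0 < W.consumed a ts by have := hcons a has; omega)
  have hvc : v = c := Finset.card_le_one.mp (not_lt.mp hcard) v
    (mem_postset.mpr (mem_preset.mp hav)) c (mem_postset.mpr hac)
  obtain ⟨l₁, l₂, rfl⟩ := List.append_of_mem hv
  obtain ⟨hl₁, hv_en, -⟩ := fireable_append.mp hts
  exact ⟨l₁, hl₁, .inr ⟨hct, hvc ▸ hv_en⟩⟩

-- The token at `a` can be pushed along the flow to `s`, which would then receive a second one.
theorem Sound.not_precedes_of_active_of_produced (hsound : W.Sound) (hfc : W.FreeChoice)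
    (hacyc : W.Acyclic) {ts : List α} {a s : α} (h : W.Fireable W.initialMarking ts)
    (ha : W.Active a (W.fireSeq W.initialMarking ts)) (hs : 0 < W.produced s ts) :
    ¬ W.Precedes a s := by
  intro has
  have hsp : s ∈ W.places := by
    obtain ⟨t, ht, hst⟩ := List.countP_pos_iff.mp hs
    exact (mem_transitions_iff_of_mem_flow (by simpa using hst)).mp (h.mem_transitions ht)
  induction has using Relation.TransGen.head_induction_on generalizing ts with
  | single has =>
    have hat : _ ∈ W.transitions := (mem_transitions_iff_of_mem_flow has).mpr hsp
    have h' := fireable_append_singleton.mpr ⟨h, ha.enabled hat⟩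
    have := hsound.produced_le_one hfc hacyc h' s
    simp [produced_append, produced_cons, has] at this
    omega
  | head hac _ ih =>
    obtain ⟨l, hl, hc⟩ := hsound.exists_fireable_active_of_flow hfc h.reachable ha hac
    exact ih (fireable_append.mpr ⟨h, hl⟩) (by simpa using hc) (by simp; omega)

theorem Sound.not_precedes_of_active_of_marked (hsound : W.Sound) (hfc : W.FreeChoice)
    (hacyc : W.Acyclic) {M : α → ℕ} {a s : α} (hM : W.Reachable W.initialMarking M)
    (ha : W.Active a M) (hs : 1 ≤ M s) : ¬ W.Precedes a s := by
  intro has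
  obtain ⟨ts, h, rfl⟩ := reachable_iff_exists_fireable.mp hM
  have hsrc : s ≠ W.source := by
    rintro rfl
    obtain ⟨c, hcs⟩ := has.exists_flow_right
    simpa [W.source_no_pre] using mem_preset.mpr hcs
  have := h.fireSeq_add_consumed s
  simp only [initialMarking, if_neg hsrc] at this
  exact hsound.not_precedes_of_active_of_produced hfc hacyc h ha (by omega) has

theorem Sound.mem_concurrent_of_mem_postset (hsound : W.Sound) (hfc : W.FreeChoice)
    (hacyc : W.Acyclic) {x y s : α} (hy : y ∈ W.transitions)
    (hxy : (x, y) ∈ W.Concurrent W.initialMarking) (hs : s ∈ W.postset y) (hxs : x ≠ s) :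
    (x, s) ∈ W.Concurrent W.initialMarking := by
  obtain ⟨M, hM, hx, hyM, hdisj⟩ := mem_concurrent_iff.mp hxy
  have hyen := hyM.enabled hy
  have hsp : s ∈ W.places := (mem_transitions_iff_of_mem_flow (mem_postset.mp hs)).mp hy
  have hpre_y : W.preset y ⊆ W.activationSet y := fun z hz => mem_activationSet.mpr (.inr ⟨hy, hz⟩)
  have hM' : W.Reachable W.initialMarking (W.fire M y) := hM.tail ⟨y, hyen, rfl⟩
  refine mem_concurrent_iff.mpr ⟨_, hM', hx.fire (hdisj.mono_right hpre_y),
    .inl ⟨hsp, one_le_fire_of_mem_postset hs⟩, ?_⟩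
  rw [activationSet_of_mem_places hsp, Finset.disjoint_singleton_right, mem_activationSet]
  rintro (rfl | ⟨hxt, hsx⟩)
  · exact hxs rfl
  -- otherwise `s` is marked before `y` fires and receives a second token from `y`
  have hsy : s ∉ W.preset y := fun hsy => Finset.disjoint_left.mp hdisj
    (mem_activationSet.mpr (.inr ⟨hxt, hsx⟩)) (hpre_y hsy)
  have hsafe := hsound.marking_le_one hfc hacyc hM' s
  have := (hx.enabled hxt).2 s hsx
  simp only [fire, if_neg hsy, if_pos hs] at hsafe
  omega

theorem Sound.not_hasAcyclicPath_of_mem_concurrent (hsound : W.Sound) (hfc : W.FreeChoice)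
    (hacyc : W.Acyclic) {x s : α} (hsp : s ∈ W.places)
    (hxs : (x, s) ∈ W.Concurrent W.initialMarking) : ¬ W.HasAcyclicPath x s := by
  rintro ⟨w, ⟨hw, -⟩, hwx, hws⟩
  obtain ⟨M, hM, hx, hs | hs, -⟩ := mem_concurrent_iff.mp hxs
  · exact hsound.not_precedes_of_active_of_marked hfc hacyc hM hx hs.2
      (.of_isPath hw hwx hws (ne_of_mem_concurrent hxs))
  · exact not_mem_transitions_of_mem_places hsp hs.1

end WorkflowNet

/-- In a sound acyclic free-choice workflow net: for every transition `y`, every node `x`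
concurrent with `y`, and every place `s ∈ y•`, there is no acyclic path from `x` to `s`
iff `x` and `s` are concurrent. -/
theorem case1_no_path_iff_concurrent {α : Type} [DecidableEq α] (W : WorkflowNet α)
    (hfc : W.toPetriNet.FreeChoice) (hacyc : W.toPetriNet.Acyclic) (hsound : W.Sound) :
    ∀ y ∈ W.transitions, ∀ x : α,
      (x, y) ∈ W.toPetriNet.Concurrent W.initialMarking →
      ∀ s ∈ W.toPetriNet.postset y,
        (¬ W.toPetriNet.HasAcyclicPath x s ↔
          (x, s) ∈ W.toPetriNet.Concurrent W.initialMarking) := by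
  intro y hy x hxy s hs
  have hsp : s ∈ W.places :=
    (PetriNet.mem_transitions_iff_of_mem_flow (PetriNet.mem_postset.mp hs)).mp hy
  refine ⟨fun hnp => hsound.mem_concurrent_of_mem_postset hfc hacyc hy hxy hs ?_,
    hsound.not_hasAcyclicPath_of_mem_concurrent hfc hacyc hsp⟩
  rintro rfl
  obtain ⟨M, -, hx, -⟩ := PetriNet.mem_concurrent_iff.mp hxy
  exact hnp (PetriNet.hasAcyclicPath_self hx.mem_nodes)
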